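/- For a torus action, w ∈ closure(O_v) if and only if there exists ν ∈ ℤ^d such that: (a) {j ∈ supp(v) | ν·m^{(j)} = 0} = supp(w) and ν·m^{(k)} > 0 for all k ∈ supp(v)∖supp(w); and (b) v|_{supp(w)} lies in the T-orbit of w. -/

import Mathlib

open scoped BigOperators

noncomputable section

/-- Action of the torus `(ℂˣ)^d` on `ℂ^n` given by the integer weight matrix `M`:
coordinate `j` is scaled by the Laurent monomial `∏ i, (t i) ^ (M i j)`. -/
def torusAct {d n : ℕ} (M : Matrix (Fin d) (Fin n) ℤ) (t : Fin d → ℂˣ) (v : Fin n → ℂ) :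
    Fin n → ℂ := fun j => (∏ i, (t i : ℂ) ^ M i j) * v j

/-- The orbit of `v` under the torus action. -/
def torusOrbit {d n : ℕ} (M : Matrix (Fin d) (Fin n) ℤ) (v : Fin n → ℂ) : Set (Fin n → ℂ) :=
  {w | ∃ t : Fin d → ℂˣ, w = torusAct M t v}

/-- The Newton cone `C(v)`: the convex cone generated by the columns `m⁽ʲ⁾` of `M`
for `j` in the support of `v`. -/
def newtonCone {d n : ℕ} (M : Matrix (Fin d) (Fin n) ℤ) (v : Fin n → ℂ) : Set (Fin d → ℝ) :=
  {y | ∃ c : Fin n → ℝ, (∀ j, 0 ≤ c j) ∧ (∀ j, v j = 0 → c j = 0) ∧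
    y = ∑ j, c j • (fun i => (M i j : ℝ))}

/-- The lineality space `L(v) = C(v) ∩ (-C(v))` of the Newton cone. -/
def lineality {d n : ℕ} (M : Matrix (Fin d) (Fin n) ℤ) (v : Fin n → ℂ) : Set (Fin d → ℝ) :=
  newtonCone M v ∩ -newtonCone M v

/-- The essential support: indices `j` in the support of `v` whose weight column
lies in the lineality space of the Newton cone. -/
def esupp {d n : ℕ} (M : Matrix (Fin d) (Fin n) ℤ) (v : Fin n → ℂ) : Set (Fin n) :=
  {j | v j ≠ 0 ∧ (fun i => (M i j : ℝ)) ∈ lineality M v}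

/-!
If `t_k • v → w`, put `x_k = -log |t_k|`. Then `x_k ⬝ m⁽ʲ⁾` converges for `j ∈ supp w` and tends
to `+∞` for `j ∈ supp v \ supp w`. A bounded correction moves `x_k` into the kernel of the first
family of weights, which gives a real `ν`. Since the equations have integer coefficients, there is
also a rational `ν`, because `ℚ`-linear functionals `ℝ → ℚ` approximate the identity pointwise,
and after clearing denominators an integral one. For (b), the characters `χ_j(t_k)` with
`j ∈ supp w` converge to `w_j / v_j ≠ 0`. So these limits satisfy every multiplicative relation
among the characters, and since `ℂˣ` is divisible (an injective `ℤ`-module) they are the values of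
the characters at some `t`. Conversely, the one-parameter subgroup `s ↦ s ^ ν` drives `v` to
`v|_{supp w}` as `s → 0`, and `w` lies in the orbit of that limit.
-/

open Filter Topology
open scoped Matrix

lemma Finset.prod_zpow_eq_zpow_sum {G ι : Type*} [CommGroup G] (s : Finset ι) (f : ι → ℤ) (a : G) :
    ∏ i ∈ s, a ^ f i = a ^ ∑ i ∈ s, f i := by
  induction s using Finset.cons_induction <;> simp [zpow_add, *]

section Monomial

variable {G : Type*} [CommGroup G] {κ ι : Type*} [Fintype κ]

def monomialMap (M : Matrix κ ι ℤ) (t : κ → G) (j : ι) : G := ∏ i, t i ^ M i j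

variable (M : Matrix κ ι ℤ)

@[simp]
lemma monomialMap_one : monomialMap M (1 : κ → G) = 1 := by
  ext j; simp [monomialMap]

lemma monomialMap_mul (t s : κ → G) :
    monomialMap M (t * s) = monomialMap M t * monomialMap M s := by
  ext j; simp [monomialMap, mul_zpow, Finset.prod_mul_distrib]

lemma monomialMap_zpow (s : G) (ν : κ → ℤ) :
    monomialMap M (fun i => s ^ ν i) = fun j => s ^ (ν ᵥ* M) j := by
  ext j; simp [monomialMap, Matrix.vecMul, dotProduct, ← zpow_mul, Finset.prod_zpow_eq_zpow_sum]

lemma prod_monomialMap_zpow [Fintype ι] (t : κ → G) (c : ι → ℤ) :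
    ∏ j, monomialMap M t j ^ c j = ∏ i, t i ^ (M *ᵥ c) i := by
  simp only [monomialMap, Matrix.mulVec, dotProduct, ← Finset.prod_zpow, ← zpow_mul]
  rw [Finset.prod_comm]
  simp [Finset.prod_zpow_eq_zpow_sum]

end Monomial

theorem Module.Baer.exists_comp_eq_of_ker_le {R M N Q : Type*} [Ring R] [AddCommGroup M]
    [AddCommGroup N] [AddCommGroup Q] [Module R M] [Module R N] [Module R Q]
    (hQ : Module.Baer R Q) (φ : M →ₗ[R] N) (ζ : M →ₗ[R] Q) (h : LinearMap.ker φ ≤ LinearMap.ker ζ) :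
    ∃ τ : N →ₗ[R] Q, τ ∘ₗ φ = ζ := by
  obtain ⟨τ, hτ⟩ := hQ.extension_property (LinearMap.range φ).subtype
    (Submodule.injective_subtype _) ((LinearMap.ker φ).liftQ ζ h ∘ₗ φ.quotKerEquivRange.symm)
  refine ⟨τ, LinearMap.ext fun c => ?_⟩
  have := LinearMap.congr_fun hτ ⟨φ c, LinearMap.mem_range_self φ c⟩
  simpa [LinearMap.quotKerEquivRange_symm_apply_image] using this

theorem exists_monomialMap_eq_of_relations {G κ ι : Type*} [CommGroup G] [RootableBy G ℤ]
    [Fintype κ] [Fintype ι] (P : Matrix κ ι ℤ) (z : ι → G)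
    (h : ∀ c, P *ᵥ c = 0 → ∏ j, z j ^ c j = 1) : ∃ t : κ → G, monomialMap P t = z := by
  classical
  let _ : DivisibleBy (Additive G) ℤ :=
    divisibleByOfSMulRightSurj _ _ (RootableBy.surjective_pow G ℤ ·)
  obtain ⟨τ, hτ⟩ := (Module.Baer.of_divisible (Additive G)).exists_comp_eq_of_ker_le
    P.mulVecLin (Fintype.linearCombination ℤ (Additive.ofMul ∘ z)) fun c hc => by
      simpa [Fintype.linearCombination_apply] using congrArg Additive.ofMul (h c hc)
  refine ⟨fun i => (τ (Pi.single i 1)).toMul, funext fun j => ?_⟩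
  have hj := LinearMap.congr_fun hτ (Pi.single j 1)
  rw [LinearMap.comp_apply, Matrix.mulVecLin_apply, Matrix.mulVec_single_one,
    ← (Pi.basisFun ℤ κ).sum_repr (P.col j)] at hj
  simp only [map_sum, map_zsmul, Pi.basisFun_repr, Pi.basisFun_apply] at hj
  simpa [monomialMap, ← toMul_zsmul, ← toMul_sum, Fintype.linearCombination_apply] using
    congrArg Additive.toMul hj

theorem exists_monomialMap_eq_of_tendsto {α 𝕜 κ ι : Type*} [NormedField 𝕜] [RootableBy 𝕜ˣ ℤ]
    [Fintype κ] [Fintype ι] (P : Matrix κ ι ℤ) {l : Filter α}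
    [l.NeBot] {t : α → κ → 𝕜ˣ} {a : ι → 𝕜} (ha : ∀ j, a j ≠ 0)
    (h : ∀ j, Tendsto (fun k => (↑(monomialMap P (t k) j) : 𝕜)) l (𝓝 (a j))) :
    ∃ s : κ → 𝕜ˣ, ∀ j, ↑(monomialMap P s j) = a j := by
  have hrel : ∀ c, P *ᵥ c = 0 → ∏ j, Units.mk0 (a j) (ha j) ^ c j = 1 := fun c hc => by
    have hprod : ∀ k, ∏ j, (↑(monomialMap P (t k) j) : 𝕜) ^ c j = 1 := fun k => by
      simpa [hc, Units.val_zpow_eq_zpow_val] using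
        congrArg Units.val (prod_monomialMap_zpow P (t k) c)
    have hlim := tendsto_finsetProd Finset.univ fun j _ => (h j).zpow₀ (c j) (.inl (ha j))
    simp only [hprod] at hlim
    ext
    simpa [Units.val_zpow_eq_zpow_val] using (tendsto_nhds_unique tendsto_const_nhds hlim).symm
  obtain ⟨s, hs⟩ := exists_monomialMap_eq_of_relations P _ hrel
  exact ⟨s, fun j => by rw [hs]; rfl⟩

theorem LinearMap.exists_mem_ker_tendsto_sub {𝕜 E F α : Type*} [NontriviallyNormedField 𝕜]
    [CompleteSpace 𝕜] [AddCommGroup E] [Module 𝕜 E] [TopologicalSpace E] [IsTopologicalAddGroup E]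
    [ContinuousSMul 𝕜 E] [AddCommGroup F] [Module 𝕜 F] [TopologicalSpace F]
    [IsTopologicalAddGroup F] [ContinuousSMul 𝕜 F] [T2Space F] [FiniteDimensional 𝕜 F]
    (L : E →ₗ[𝕜] F) {x : α → E} {l : Filter α} {c : F} (h : Tendsto (fun k => L (x k)) l (𝓝 c)) :
    ∃ y : α → E, (∀ k, L (y k) = 0) ∧ ∃ e, Tendsto (fun k => x k - y k) l (𝓝 e) := by
  obtain ⟨R, hR⟩ := L.rangeRestrict.exists_rightInverse_of_surjective L.range_rangeRestrict
  obtain ⟨P, hP⟩ := (LinearMap.range L).subtype.exists_leftInverse_of_injective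
    (LinearMap.range L).ker_subtype
  have hLRL : ∀ z, L (R (P (L z))) = L z := fun z => by
    have h1 : P (L z) = L.rangeRestrict z := by
      simpa using LinearMap.congr_fun hP (L.rangeRestrict z)
    simpa [h1] using congrArg Subtype.val (LinearMap.congr_fun hR (L.rangeRestrict z))
  refine ⟨fun k => x k - R (P (L (x k))), fun k => by simp [hLRL], R (P c), ?_⟩
  simpa [Function.comp_def] using ((R ∘ₗ P).continuous_of_finiteDimensional.tendsto c).comp h

theorem exists_vecMul_eq_zero_and_pos_of_tendsto {α κ ι : Type*} [Fintype κ] [Finite ι]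
    (M : Matrix κ ι ℝ) {A B : Set ι} {l : Filter α} [l.NeBot] {x : α → κ → ℝ}
    (hA : ∀ j ∈ A, ∃ c, Tendsto (fun k => (x k ᵥ* M) j) l (𝓝 c))
    (hB : ∀ j ∈ B, Tendsto (fun k => (x k ᵥ* M) j) l atTop) :
    ∃ y : κ → ℝ, (∀ j ∈ A, (y ᵥ* M) j = 0) ∧ ∀ j ∈ B, 0 < (y ᵥ* M) j := by
  choose! c hc using hA
  let L : (κ → ℝ) →ₗ[ℝ] A → ℝ := LinearMap.pi fun j => LinearMap.proj (j : ι) ∘ₗ M.vecMulLinear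
  obtain ⟨y, hyL, e, he⟩ := L.exists_mem_ker_tendsto_sub (c := fun j => c j)
    (tendsto_pi_nhds.2 fun j => hc j j.2)
  have hyB : ∀ j ∈ B, Tendsto (fun k => (y k ᵥ* M) j) l atTop := fun j hj => by
    have hdiff : Tendsto (fun k => ((x k - y k) ᵥ* M) j) l (𝓝 ((e ᵥ* M) j)) :=
      (((continuous_apply j).comp (continuous_id.matrix_vecMul continuous_const)).tendsto e).comp he
    simpa [Matrix.sub_vecMul] using (hB j hj).atTop_add hdiff.neg
  obtain ⟨k, hk⟩ := ((Set.toFinite B).eventually_all.2 fun j hj =>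
    (hyB j hj).eventually_gt_atTop 0).exists
  exact ⟨y k, fun j hj => congrFun (hyL k) ⟨j, hj⟩, hk⟩

theorem Real.exists_seq_linearMap_rat_tendsto :
    ∃ f : ℕ → ℝ →ₗ[ℚ] ℚ, ∀ x, Tendsto (fun k => (f k x : ℝ)) atTop (𝓝 x) := by
  obtain ⟨ι, b⟩ : Σ ι : Type, Module.Basis ι ℚ ℝ := ⟨_, Module.Basis.ofVectorSpace ℚ ℝ⟩
  choose g _ _ hg using fun l => Real.exists_seq_rat_strictMono_tendsto (b l)
  refine ⟨fun k => b.constr ℚ fun l => g l k, fun x => ?_⟩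
  have hx : ∑ l ∈ (b.repr x).support, (b.repr x l : ℝ) * b l = x := by
    have := b.linearCombination_repr x
    rw [Finsupp.linearCombination_apply, Finsupp.sum] at this
    simpa only [Rat.smul_def] using this
  simp only [Module.Basis.constr_apply, Finsupp.sum, smul_eq_mul, Rat.cast_sum, Rat.cast_mul]
  simpa only [hx] using
    tendsto_finsetSum (b.repr x).support fun l _ => (hg l).const_mul (b.repr x l : ℝ)

lemma map_vecMul_intCast {R S F κ ι : Type*} [Ring R] [Ring S] [FunLike F R S]
    [AddMonoidHomClass F R S] [Fintype κ] (f : F) (y : κ → R) (M : Matrix κ ι ℤ) (j : ι) :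
    f ((y ᵥ* M.map (↑)) j) = ((f ∘ y) ᵥ* M.map (↑)) j := by
  simp only [Matrix.vecMul, dotProduct, Matrix.map_apply, map_sum, Function.comp_apply]
  refine Finset.sum_congr rfl fun i _ => ?_
  rw [← Int.cast_comm, ← zsmul_eq_mul, map_zsmul, zsmul_eq_mul, Int.cast_comm]

theorem exists_rat_vecMul_of_real {κ ι : Type*} [Fintype κ] [Finite ι] (M : Matrix κ ι ℤ)
    {A B : Set ι} {y : κ → ℝ} (hA : ∀ j ∈ A, (y ᵥ* M.map (↑)) j = 0)
    (hB : ∀ j ∈ B, 0 < (y ᵥ* M.map (↑)) j) :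
    ∃ q : κ → ℚ, (∀ j ∈ A, (q ᵥ* M.map (↑)) j = 0) ∧ ∀ j ∈ B, 0 < (q ᵥ* M.map (↑)) j := by
  obtain ⟨f, hf⟩ := Real.exists_seq_linearMap_rat_tendsto
  obtain ⟨k, hk⟩ := ((Set.toFinite B).eventually_all.2 fun j hj =>
    (hf _).eventually_const_lt (hB j hj)).exists
  refine ⟨f k ∘ y, fun j hj => ?_, fun j hj => ?_⟩
  · rw [← map_vecMul_intCast, hA j hj, map_zero]
  · rw [← map_vecMul_intCast]
    exact_mod_cast hk j hj

lemma exists_pos_nat_mul_eq_intCast {κ : Type*} [Fintype κ] (q : κ → ℚ) :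
    ∃ N : ℕ, 0 < N ∧ ∃ ν : κ → ℤ, ∀ i, (ν i : ℚ) = N * q i := by
  refine ⟨∏ i, (q i).den, Finset.prod_pos fun i _ => (q i).pos, ?_⟩
  choose c hc using fun i => Finset.dvd_prod_of_mem (fun i => (q i).den) (Finset.mem_univ i)
  refine ⟨fun i => (q i).num * c i, fun i => ?_⟩
  dsimp only
  rw [hc i]
  push_cast
  rw [← Rat.mul_den_eq_num]
  ring

theorem exists_int_vecMul_of_rat {κ ι : Type*} [Fintype κ] (M : Matrix κ ι ℤ)
    {A B : Set ι} {q : κ → ℚ} (hA : ∀ j ∈ A, (q ᵥ* M.map (↑)) j = 0)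
    (hB : ∀ j ∈ B, 0 < (q ᵥ* M.map (↑)) j) :
    ∃ ν : κ → ℤ, (∀ j ∈ A, (ν ᵥ* M) j = 0) ∧ ∀ j ∈ B, 0 < (ν ᵥ* M) j := by
  obtain ⟨N, hN, ν, hν⟩ := exists_pos_nat_mul_eq_intCast q
  have hcast : ∀ j, ((ν ᵥ* M) j : ℚ) = N * (q ᵥ* M.map (↑)) j := fun j => by
    simp [Matrix.vecMul, dotProduct, hν, Finset.mul_sum, mul_assoc]
  refine ⟨ν, fun j hj => ?_, fun j hj => ?_⟩
  · have : ((ν ᵥ* M) j : ℚ) = 0 := by rw [hcast, hA j hj, mul_zero]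
    exact_mod_cast this
  · have : (0 : ℚ) < (ν ᵥ* M) j := by rw [hcast]; exact mul_pos (by exact_mod_cast hN) (hB j hj)
    exact_mod_cast this

lemma log_norm_monomialMap {𝕜 κ ι : Type*} [NormedField 𝕜] [Fintype κ] (M : Matrix κ ι ℤ)
    (t : κ → 𝕜ˣ) (j : ι) :
    Real.log ‖(↑(monomialMap M t j) : 𝕜)‖ = ((fun i => Real.log ‖(t i : 𝕜)‖) ᵥ* M.map (↑)) j := by
  simp only [monomialMap, Units.coe_prod, Units.val_zpow_eq_zpow_val, norm_prod, norm_zpow]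
  rw [Real.log_prod fun i _ => zpow_ne_zero _ (norm_ne_zero_iff.2 (t i).ne_zero)]
  simp [Matrix.vecMul, dotProduct, Real.log_zpow, mul_comm]

theorem exists_int_vecMul_of_tendsto {α 𝕜 κ ι : Type*} [NormedField 𝕜] [Fintype κ] [Finite ι]
    (M : Matrix κ ι ℤ) {A B : Set ι} {l : Filter α} [l.NeBot] {t : α → κ → 𝕜ˣ}
    (hA : ∀ j ∈ A, ∃ a ≠ 0, Tendsto (fun k => (↑(monomialMap M (t k) j) : 𝕜)) l (𝓝 a))
    (hB : ∀ j ∈ B, Tendsto (fun k => (↑(monomialMap M (t k) j) : 𝕜)) l (𝓝 0)) :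
    ∃ ν : κ → ℤ, (∀ j ∈ A, (ν ᵥ* M) j = 0) ∧ ∀ j ∈ B, 0 < (ν ᵥ* M) j := by
  let x k i := -Real.log ‖(t k i : 𝕜)‖
  have hx : ∀ k j, (x k ᵥ* M.map (↑)) j = -Real.log ‖(↑(monomialMap M (t k) j) : 𝕜)‖ := by
    intro k j
    rw [log_norm_monomialMap, ← Pi.neg_apply, ← Matrix.neg_vecMul]
    rfl
  have hxA : ∀ j ∈ A, ∃ c, Tendsto (fun k => (x k ᵥ* M.map (↑)) j) l (𝓝 c) := fun j hj => by
    obtain ⟨a, ha, hlim⟩ := hA j hj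
    simp_rw [hx]
    exact ⟨_, ((Real.continuousAt_log (norm_ne_zero_iff.2 ha)).tendsto.comp hlim.norm).neg⟩
  have hxB : ∀ j ∈ B, Tendsto (fun k => (x k ᵥ* M.map (↑)) j) l atTop := fun j hj => by
    have hnorm : Tendsto (fun k => ‖(↑(monomialMap M (t k) j) : 𝕜)‖) l (𝓝[>] 0) :=
      tendsto_nhdsWithin_iff.2 ⟨by simpa using (hB j hj).norm,
        .of_forall fun k => norm_pos_iff.2 (Units.ne_zero _)⟩
    simp_rw [hx]
    exact tendsto_neg_atBot_atTop.comp (Real.tendsto_log_nhdsGT_zero.comp hnorm)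
  obtain ⟨y, hyA, hyB⟩ := exists_vecMul_eq_zero_and_pos_of_tendsto _ hxA hxB
  obtain ⟨q, hqA, hqB⟩ := exists_rat_vecMul_of_real M hyA hyB
  exact exists_int_vecMul_of_rat M hqA hqB

noncomputable instance Complex.instRootableByUnitsInt : RootableBy ℂˣ ℤ :=
  rootableByOfPowLeftSurj _ _ fun {n} hn a =>
    ⟨Units.mk0 (Complex.exp (Complex.log a / n)) (Complex.exp_ne_zero _), Units.ext <| by
      simp [← Complex.exp_int_mul, mul_div_cancel₀ _ (Int.cast_ne_zero.2 hn : (n : ℂ) ≠ 0),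
        Complex.exp_log a.ne_zero]⟩

section TorusAction

variable {d n : ℕ} (M : Matrix (Fin d) (Fin n) ℤ)

lemma torusAct_apply (t : Fin d → ℂˣ) (v : Fin n → ℂ) (j : Fin n) :
    torusAct M t v j = ↑(monomialMap M t j) * v j := by
  simp [torusAct, monomialMap, Units.coe_prod]

lemma torusAct_torusAct (t s : Fin d → ℂˣ) (v : Fin n → ℂ) :
    torusAct M t (torusAct M s v) = torusAct M (t * s) v := by
  ext j; simp [torusAct_apply, monomialMap_mul, mul_assoc]

@[simp]
lemma torusAct_one (v : Fin n → ℂ) : torusAct M 1 v = v := by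
  ext j; simp [torusAct_apply]

lemma mem_torusOrbit_comm {u v : Fin n → ℂ} : u ∈ torusOrbit M v → v ∈ torusOrbit M u := by
  rintro ⟨t, rfl⟩
  exact ⟨t⁻¹, by simp [torusAct_torusAct]⟩

lemma continuous_torusAct (t : Fin d → ℂˣ) : Continuous (torusAct M t) :=
  continuous_pi fun j => continuous_const.mul (continuous_apply j)

lemma torusOrbit_subset_closure {u v : Fin n → ℂ} (hu : u ∈ closure (torusOrbit M v)) :
    torusOrbit M u ⊆ closure (torusOrbit M v) := by
  rintro _ ⟨t, rfl⟩
  refine map_mem_closure (continuous_torusAct M t) hu ?_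
  rintro _ ⟨s, rfl⟩
  exact ⟨t * s, torusAct_torusAct M t s v⟩

lemma tendsto_zpow_mul_nhdsNE_zero {e : Fin n → ℤ} {v : Fin n → ℂ}
    (he : ∀ j, v j ≠ 0 → 0 ≤ e j) :
    Tendsto (fun (s : ℂ) j => s ^ e j * v j) (𝓝[≠] 0) (𝓝 fun j => 0 ^ e j * v j) := by
  refine tendsto_pi_nhds.2 fun j => ?_
  by_cases hv : v j = 0
  · simp [hv]
  · exact ((continuousAt_zpow₀ _ _ (.inr (he j hv))).tendsto.mul_const _).mono_left
      nhdsWithin_le_nhds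

lemma zero_zpow_vecMul_mul_mem_closure (ν : Fin d → ℤ) {v : Fin n → ℂ}
    (hν : ∀ j, v j ≠ 0 → 0 ≤ (ν ᵥ* M) j) :
    (fun j => 0 ^ (ν ᵥ* M) j * v j) ∈ closure (torusOrbit M v) := by
  refine mem_closure_of_tendsto (tendsto_zpow_mul_nhdsNE_zero hν) ?_
  filter_upwards [self_mem_nhdsWithin] with s (hs : s ≠ 0)
  refine ⟨fun i => Units.mk0 s hs ^ ν i, ?_⟩
  ext j
  simp [torusAct_apply, monomialMap_zpow, Units.val_zpow_eq_zpow_val]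

theorem mem_closure_torusOrbit_of_one_param {v w : Fin n → ℂ} (ν : Fin d → ℤ)
    (ha : ∀ j, (v j ≠ 0 ∧ (ν ᵥ* M) j = 0) ↔ w j ≠ 0)
    (hb : ∀ k, v k ≠ 0 → w k = 0 → 0 < (ν ᵥ* M) k)
    (hc : Set.indicator {j | w j ≠ 0} v ∈ torusOrbit M w) :
    w ∈ closure (torusOrbit M v) := by
  have hν : ∀ j, v j ≠ 0 → 0 ≤ (ν ᵥ* M) j := fun j hv => by
    by_cases hw : w j = 0
    · exact (hb j hv hw).le
    · exact ((ha j).2 hw).2.ge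
  have hlim : (fun j => 0 ^ (ν ᵥ* M) j * v j) = Set.indicator {j | w j ≠ 0} v := by
    ext j
    by_cases hv : v j = 0
    · simp [hv, Set.indicator_apply]
    · by_cases hw : w j = 0
      · simp [hw, zero_zpow _ (hb j hv hw).ne']
      · simp [hw, ((ha j).2 hw).2]
  refine torusOrbit_subset_closure M ?_ (mem_torusOrbit_comm M hc)
  exact hlim ▸ zero_zpow_vecMul_mul_mem_closure M ν hν

theorem exists_one_param_of_mem_closure_torusOrbit {v w : Fin n → ℂ}
    (hw : w ∈ closure (torusOrbit M v)) :
    ∃ ν : Fin d → ℤ,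
      (∀ j, (v j ≠ 0 ∧ (ν ᵥ* M) j = 0) ↔ w j ≠ 0) ∧
      (∀ k, v k ≠ 0 → w k = 0 → 0 < (ν ᵥ* M) k) ∧
      Set.indicator {j | w j ≠ 0} v ∈ torusOrbit M w := by
  obtain ⟨u, hu, hlim⟩ := mem_closure_iff_seq_limit.1 hw
  choose t ht using hu
  have hcoord : ∀ j, Tendsto (fun k => (↑(monomialMap M (t k) j) : ℂ) * v j) atTop (𝓝 (w j)) :=
    fun j => by simpa [ht, torusAct_apply] using tendsto_pi_nhds.1 hlim j
  have hsupp : ∀ j, w j ≠ 0 → v j ≠ 0 := fun j hwj hvj =>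
    hwj (tendsto_nhds_unique (hcoord j) (by simp [hvj]))
  have hratio : ∀ j, v j ≠ 0 →
      Tendsto (fun k => (↑(monomialMap M (t k) j) : ℂ)) atTop (𝓝 (w j / v j)) := fun j hv => by
    simpa [mul_div_cancel_right₀ _ hv] using (hcoord j).div_const (v j)
  obtain ⟨ν, hνA, hνB⟩ := exists_int_vecMul_of_tendsto M (A := {j | w j ≠ 0})
    (B := {j | v j ≠ 0 ∧ w j = 0})
    (fun j hj => ⟨_, div_ne_zero hj (hsupp j hj), hratio j (hsupp j hj)⟩)
    (fun j hj => by simpa [hj.2] using hratio j hj.1)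
  obtain ⟨s, hs⟩ := exists_monomialMap_eq_of_tendsto
    (M.submatrix id (Subtype.val : {j // w j ≠ 0} → Fin n)) (a := fun j => w j / v j)
    (fun j => div_ne_zero j.2 (hsupp j j.2)) (fun j => hratio j (hsupp j j.2))
  refine ⟨ν, fun j => ⟨fun ⟨hv, h0⟩ hw0 => (hνB j ⟨hv, hw0⟩).ne' h0,
    fun hwj => ⟨hsupp j hwj, hνA j hwj⟩⟩, fun k hv hw => hνB k ⟨hv, hw⟩,
    mem_torusOrbit_comm M ⟨s, funext fun j => ?_⟩⟩
  by_cases hwj : w j = 0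
  · simp [hwj, torusAct_apply]
  · have : (↑(monomialMap M s j) : ℂ) = w j / v j := hs ⟨j, hwj⟩
    simp [hwj, torusAct_apply, this, div_mul_cancel₀ _ (hsupp j hwj)]

end TorusAction

/-- `w ∈ closure (O_v)` iff there is `ν ∈ ℤ^d` such that (a) the indices `j ∈ supp v` with
`ν ⬝ m⁽ʲ⁾ = 0` are exactly `supp w` and `ν ⬝ m⁽ᵏ⁾ > 0` for `k ∈ supp v \ supp w`, and
(b) the restriction `v|_{supp w}` lies in the `T`-orbit of `w`. -/
theorem mem_closure_orbit_iff_one_param {d n : ℕ} (M : Matrix (Fin d) (Fin n) ℤ)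
    (v w : Fin n → ℂ) :
    w ∈ closure (torusOrbit M v) ↔
      ∃ ν : Fin d → ℤ,
        (∀ j, (v j ≠ 0 ∧ ∑ i, ν i * M i j = 0) ↔ w j ≠ 0) ∧
        (∀ k, v k ≠ 0 → w k = 0 → 0 < ∑ i, ν i * M i k) ∧
        Set.indicator {j | w j ≠ 0} v ∈ torusOrbit M w :=
  ⟨exists_one_param_of_mem_closure_torusOrbit M,
    fun ⟨ν, ha, hb, hc⟩ => mem_closure_torusOrbit_of_one_param M ν ha hb hc⟩
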